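/- Let θ₁, …, θₙ be nonzero real numbers with ∑ᵢ 1/θᵢ = 1, and let u₁, …, uₙ be elements of a real inner product space. Then ‖∑ᵢ uᵢ‖² = ∑ᵢ θᵢ‖uᵢ‖² − ∑_{i<j} (1/(θᵢθⱼ))‖θᵢuᵢ − θⱼuⱼ‖². -/

import Mathlib

/-!
Expanding the square, `‖θᵢuᵢ - θⱼuⱼ‖² / (θᵢθⱼ) = g i j + g j i` with
`g i j = (θᵢ/θⱼ)‖uᵢ‖² - ⟪uᵢ, uⱼ⟫`, and `g i i = 0`. Hence the sum over `i < j` is the sum of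
`g` over all pairs, which is `∑ θᵢ‖uᵢ‖² - ‖∑ uᵢ‖²` because `∑ⱼ 1/θⱼ = 1`.
-/

open InnerProductSpace Finset

theorem Finset.sum_sum_eq_sum_diag_add_sum_lt {ι M : Type*} [Fintype ι] [LinearOrder ι]
    [AddCommMonoid M] (g : ι → ι → M) :
    ∑ i, ∑ j, g i j = ∑ i, g i i + ∑ i, ∑ j with i < j, (g i j + g j i) := by
  have hrow (i : ι) : ∑ j, g i j = g i i + ∑ j with i < j, g i j + ∑ j with j < i, g i j := by
    rw [← sum_filter_add_sum_filter_not univ (i < ·), ← sum_filter_add_sum_filter_not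
      (univ.filter (¬ i < ·)) (· < i), filter_filter, filter_filter]
    have hdiag : univ.filter (fun j => ¬ i < j ∧ ¬ j < i) = {i} := by
      ext j; simp [le_antisymm_iff, and_comm]
    rw [hdiag, sum_singleton]
    have hbelow : univ.filter (fun j => ¬ i < j ∧ j < i) = univ.filter (· < i) := by
      ext j; simp only [mem_filter, mem_univ, true_and]; exact ⟨And.right, fun h => ⟨h.asymm, h⟩⟩
    rw [hbelow]; abel
  have hswap : ∑ i, ∑ j with j < i, g i j = ∑ i, ∑ j with i < j, g j i :=
    sum_comm' (by simp)
  simp only [hrow, sum_add_distrib, hswap, add_assoc]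

theorem one_div_mul_mul_norm_smul_sub_smul_sq {F : Type*} [NormedAddCommGroup F]
    [InnerProductSpace ℝ F] {a b : ℝ} (ha : a ≠ 0) (hb : b ≠ 0) (x y : F) :
    1 / (a * b) * ‖a • x - b • y‖ ^ 2 = a / b * ‖x‖ ^ 2 + b / a * ‖y‖ ^ 2 - 2 * ⟪x, y⟫_ℝ := by
  rw [norm_sub_sq_real, norm_smul, norm_smul, real_inner_smul_left, real_inner_smul_right,
    mul_pow, mul_pow, Real.norm_eq_abs, Real.norm_eq_abs, sq_abs, sq_abs]
  field_simp
  ring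

theorem norm_sum_sq_eq_sum_sum_inner {ι F : Type*} [Fintype ι] [NormedAddCommGroup F]
    [InnerProductSpace ℝ F] (u : ι → F) :
    ‖∑ i, u i‖ ^ 2 = ∑ i, ∑ j, ⟪u i, u j⟫_ℝ := by
  rw [← real_inner_self_eq_norm_sq, sum_inner]
  simp only [inner_sum]

theorem sum_sum_div_mul_eq_of_sum_inv_eq_one {ι : Type*} [Fintype ι] {θ : ι → ℝ}
    (hsum : ∑ i, 1 / θ i = 1) (c : ι → ℝ) :
    ∑ i, ∑ j, θ i / θ j * c i = ∑ i, θ i * c i := by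
  refine sum_congr rfl fun i _ => ?_
  simp_rw [div_eq_mul_one_div (θ i)]
  rw [← sum_mul, ← mul_sum, hsum, mul_one]

theorem norm_sum_sq_eq_sum_mul_norm_sq_sub_sum_lt {ι F : Type*} [Fintype ι] [LinearOrder ι]
    [NormedAddCommGroup F] [InnerProductSpace ℝ F] {θ : ι → ℝ} (hθ : ∀ i, θ i ≠ 0)
    (hsum : ∑ i, 1 / θ i = 1) (u : ι → F) :
    ‖∑ i, u i‖ ^ 2 = ∑ i, θ i * ‖u i‖ ^ 2
      - ∑ i, ∑ j with i < j, 1 / (θ i * θ j) * ‖θ i • u i - θ j • u j‖ ^ 2 := by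
  set g : ι → ι → ℝ := fun i j => θ i / θ j * ‖u i‖ ^ 2 - ⟪u i, u j⟫_ℝ
  have hpair (i j : ι) : 1 / (θ i * θ j) * ‖θ i • u i - θ j • u j‖ ^ 2 = g i j + g j i := by
    simp only [g]
    rw [one_div_mul_mul_norm_smul_sub_smul_sq (hθ i) (hθ j), real_inner_comm (u i) (u j)]
    ring
  have hdiag : ∑ i, g i i = 0 :=
    sum_eq_zero fun i _ => by simp [g, div_self (hθ i)]
  have htotal : ∑ i, ∑ j, g i j = ∑ i, θ i * ‖u i‖ ^ 2 - ‖∑ i, u i‖ ^ 2 := by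
    simp only [g, sum_sub_distrib, sum_sum_div_mul_eq_of_sum_inv_eq_one hsum,
      norm_sum_sq_eq_sum_sum_inner]
  simp only [hpair]
  linarith [sum_sum_eq_sum_diag_add_sum_lt g]

theorem stmt2 {H : Type*} [NormedAddCommGroup H] [InnerProductSpace ℝ H]
    (n : ℕ) (θ : Fin n → ℝ) (hθ : ∀ i, θ i ≠ 0) (hsum : ∑ i, 1 / θ i = 1)
    (u : Fin n → H) :
    ‖∑ i, u i‖ ^ 2
      = ∑ i, θ i * ‖u i‖ ^ 2
        - ∑ i, ∑ j ∈ Finset.univ.filter (fun j => i < j),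
            (1 / (θ i * θ j)) * ‖θ i • u i - θ j • u j‖ ^ 2 :=
  norm_sum_sq_eq_sum_mul_norm_sq_sub_sum_lt hθ hsum u
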